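/- In a CDG-algebra over a field of characteristic 0, the Chern class is invariant under equivalence: if h' = h + d(α) + α² and d' = d + [α,·] for some α ∈ B^1, then T(h'^n) - T(h^n) lies in the image of the induced differential δ_C on C = B/[B,B]; hence the cohomology class of c_n = T(h^n) in H(C, δ_C) is unchanged. -/
import Mathlib


/-- A CDG-algebra structure on a ℤ-graded algebra `B` (with grading `𝒜`): a degree `+1`
superderivation `d` and a curvature element `h ∈ B²` with `d² = [h, ·]` and `d(h) = 0`.
(Since `h` has even degree, `[h, x] = h*x - x*h` for all `x`.) -/
structure CDG (k : Type) [Field k] (B : Type) [Ring B] [Algebra k B]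
    (𝒜 : ℤ → Submodule k B) where
  d : B →ₗ[k] B
  h : B
  d_mem : ∀ (p : ℤ), ∀ x ∈ 𝒜 p, d x ∈ 𝒜 (p + 1)
  leibniz : ∀ (p : ℤ), ∀ x ∈ 𝒜 p, ∀ y : B,
    d (x * y) = d x * y + ((-1 : k) ^ p) • (x * d y)
  h_mem : h ∈ 𝒜 2
  d_sq : ∀ x : B, d (d x) = h * x - x * h
  d_h : d h = 0

/-- The set of supercommutators of homogeneous elements of `B`. -/
def superCommSet {k B : Type} [Field k] [Ring B] [Algebra k B]
    (𝒜 : ℤ → Submodule k B) : Set B :=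
  {z | ∃ (p q : ℤ) (x y : B), x ∈ 𝒜 p ∧ y ∈ 𝒜 q ∧
    z = x * y - ((-1 : k) ^ (p * q)) • (y * x)}

namespace ChernInvAux

open Polynomial

variable {k B : Type} [Field k] [Ring B] [Algebra k B]
variable {𝒜 : ℤ → Submodule k B}

/-! ### Applying a linear map to all coefficients of a polynomial -/

/-- Apply a linear map to all coefficients of a polynomial. -/
noncomputable def Dfun (d : B →ₗ[k] B) (P : B[X]) : B[X] :=
  P.sum fun j b => monomial j (d b)

lemma coeff_Dfun (d : B →ₗ[k] B) (P : B[X]) (i : ℕ) :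
    (Dfun d P).coeff i = d (P.coeff i) := by
  rw [Dfun, sum_def, finset_sum_coeff]
  simp only [coeff_monomial]
  rw [Finset.sum_ite_eq' P.support i (fun j => d (P.coeff j))]
  by_cases h : i ∈ P.support
  · simp [h]
  · simp [h, notMem_support_iff.mp h]

lemma Dfun_add (d : B →ₗ[k] B) (P Q : B[X]) :
    Dfun d (P + Q) = Dfun d P + Dfun d Q :=
  sum_add_index P Q _ (by simp) (by intros; simp)

lemma Dfun_monomial (d : B →ₗ[k] B) (i : ℕ) (b : B) :
    Dfun d (monomial i b) = monomial i (d b) :=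
  sum_monomial_index (n := i) b _ (by simp)

lemma coeff_X_mul_zero' (p : B[X]) : (X * p).coeff 0 = 0 := by
  rw [X_mul, coeff_mul_X_zero]

/-! ### Homogeneity of coefficients -/

/-- All coefficients homogeneous of degree `p`. -/
def HC (𝒜 : ℤ → Submodule k B) (p : ℤ) (P : B[X]) : Prop := ∀ j, P.coeff j ∈ 𝒜 p

lemma HC.mul [GradedAlgebra 𝒜] {a b : ℤ} {P Q : B[X]}
    (hP : HC 𝒜 a P) (hQ : HC 𝒜 b Q) : HC 𝒜 (a + b) (P * Q) := by
  intro j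
  rw [coeff_mul]
  exact Submodule.sum_mem _ fun x _ => SetLike.mul_mem_graded (hP _) (hQ _)

lemma HC.one [GradedAlgebra 𝒜] : HC 𝒜 0 (1 : B[X]) := by
  intro j
  rcases j with _ | j
  · rw [coeff_one]; simpa using SetLike.one_mem_graded 𝒜
  · rw [coeff_one]; simp

lemma HC.derivative {a : ℤ} {P : B[X]} (hP : HC 𝒜 a P) :
    HC 𝒜 a (Polynomial.derivative P) := by
  intro j
  rw [coeff_derivative]
  have hc : ((j : B) + 1) = ((j + 1 : ℕ) : B) := by push_cast; ring
  rw [hc, ← nsmul_eq_mul', ← Nat.cast_smul_eq_nsmul k]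
  exact Submodule.smul_mem _ _ (hP _)

lemma HC.C_mem {a : ℤ} {x : B} (hx : x ∈ 𝒜 a) : HC 𝒜 a (C x : B[X]) := by
  intro j
  rw [coeff_C]
  split <;> simp [hx]

/-! ### Supercommutators and the submodule `N` -/

variable {N : Submodule k B}
variable (hN : N = Submodule.span k (superCommSet 𝒜))

include hN in
lemma comm_mem {p q : ℤ} {x y : B} (hx : x ∈ 𝒜 p) (hy : y ∈ 𝒜 q)
    (hpq : Even (p * q)) : x * y - y * x ∈ N := by
  have hmem : x * y - ((-1 : k) ^ (p * q)) • (y * x) ∈ superCommSet 𝒜 :=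
    ⟨p, q, x, y, hx, hy, rfl⟩
  have := hN ▸ Submodule.subset_span hmem
  rwa [hpq.neg_one_zpow, one_smul] at this

include hN in
lemma anticomm_mem {p q : ℤ} {x y : B} (hx : x ∈ 𝒜 p) (hy : y ∈ 𝒜 q)
    (hpq : Odd (p * q)) : x * y + y * x ∈ N := by
  have hmem : x * y - ((-1 : k) ^ (p * q)) • (y * x) ∈ superCommSet 𝒜 :=
    ⟨p, q, x, y, hx, hy, rfl⟩
  have := hN ▸ Submodule.subset_span hmem
  rwa [hpq.neg_one_zpow, neg_smul, one_smul, sub_neg_eq_add] at this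

/-- All coefficients in `N`. -/
def CN (N : Submodule k B) (P : B[X]) : Prop := ∀ j, P.coeff j ∈ N

include hN in
lemma CN_commutator {a b : ℤ} {P Q : B[X]} (hP : HC 𝒜 a P) (hQ : HC 𝒜 b Q)
    (hab : Even (a * b)) : CN N (P * Q - Q * P) := by
  intro j
  rw [coeff_sub, coeff_mul, coeff_mul,
    ← Finset.Nat.sum_antidiagonal_swap (f := fun p => Q.coeff p.1 * P.coeff p.2),
    ← Finset.sum_sub_distrib]
  exact Submodule.sum_mem _ fun x _ => comm_mem hN (hP _) (hQ _) hab

include hN in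
lemma CN_anticommutator {a b : ℤ} {P Q : B[X]} (hP : HC 𝒜 a P) (hQ : HC 𝒜 b Q)
    (hab : Odd (a * b)) : CN N (P * Q + Q * P) := by
  intro j
  rw [coeff_add, coeff_mul, coeff_mul,
    ← Finset.Nat.sum_antidiagonal_swap (f := fun p => Q.coeff p.1 * P.coeff p.2),
    ← Finset.sum_add_distrib]
  exact Submodule.sum_mem _ fun x _ => anticomm_mem hN (hP _) (hQ _) hab

/-! ### The weighted "integral of the trace" -/

/-- `∫₀¹ Tr` : sum of the coefficient classes in `B ⧸ N`, weighted by `1/(j+1)`. -/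
noncomputable def integ (N : Submodule k B) : B[X] →+ (B ⧸ N) :=
  AddMonoidHom.mk' (fun P => P.sum fun j b => ((j : k) + 1)⁻¹ • N.mkQ b)
    (fun P Q => sum_add_index P Q _ (by simp) (by intros; rw [map_add, smul_add]))

lemma integ_apply (N : Submodule k B) (P : B[X]) :
    integ N P = P.sum fun j b => ((j : k) + 1)⁻¹ • N.mkQ b := rfl

lemma integ_of_CN {P : B[X]} (hP : CN N P) : integ N P = 0 := by
  rw [integ_apply, sum_def]
  refine Finset.sum_eq_zero fun j _ => ?_
  rw [show N.mkQ (P.coeff j) = 0 from (Submodule.Quotient.mk_eq_zero N).mpr (hP j), smul_zero]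

lemma integ_Dfun (d : B →ₗ[k] B) (δC : (B ⧸ N) →ₗ[k] (B ⧸ N))
    (hδC : ∀ x : B, δC (N.mkQ x) = N.mkQ (d x)) (P : B[X]) :
    integ N (Dfun d P) = δC (integ N P) := by
  induction P using Polynomial.induction_on' with
  | add p q hp hq => rw [Dfun_add, map_add, map_add, hp, hq, map_add]
  | monomial i b =>
      rw [Dfun_monomial, integ_apply, integ_apply,
        sum_monomial_index (n := i) _ _ (by simp), sum_monomial_index (n := i) _ _ (by simp),
        map_smul, hδC]

lemma integ_derivative [CharZero k] (P : B[X]) :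
    integ N (Polynomial.derivative P) = N.mkQ (P.eval 1) - N.mkQ (P.coeff 0) := by
  induction P using Polynomial.induction_on' with
  | add p q hp hq =>
      rw [map_add, map_add, hp, hq, eval_add, coeff_add, map_add, map_add]
      abel
  | monomial i b =>
      rw [derivative_monomial]
      rcases i with _ | i
      · rw [integ_apply]
        simp
      · rw [integ_apply, sum_monomial_index _ _ (by simp)]
        rw [coeff_monomial, if_neg (Nat.succ_ne_zero i), eval_monomial, one_pow, mul_one,
          map_zero, sub_zero]
        rw [← nsmul_eq_mul', map_nsmul, ← Nat.cast_smul_eq_nsmul k, smul_smul,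
          Nat.add_sub_cancel]
        rw [show ((i:k)+1)⁻¹ * ((i+1 : ℕ) : k) = 1 by
          rw [show ((i+1 : ℕ) : k) = (i:k)+1 by push_cast; ring]
          exact inv_mul_cancel₀ (Nat.cast_add_one_ne_zero i)]
        rw [one_smul]

/-! ### Evaluation at 1 and constant coefficient are multiplicative -/

lemma eval_one_mul' (P Q : B[X]) : (P * Q).eval 1 = P.eval 1 * Q.eval 1 := by
  have h : ∀ R : B[X], R.eval 1 = eval₂ (RingHom.id B) 1 R := fun R => rfl
  rw [h, h, h]
  exact eval₂_mul_noncomm _ _ fun _ => Commute.one_right _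

lemma eval_one_pow' (P : B[X]) (m : ℕ) : (P ^ m).eval 1 = (P.eval 1) ^ m := by
  induction m with
  | zero => simp
  | succ m ih => rw [pow_succ, pow_succ, eval_one_mul', ih]

lemma coeff_zero_pow' (P : B[X]) (m : ℕ) : (P ^ m).coeff 0 = (P.coeff 0) ^ m := by
  induction m with
  | zero => simp
  | succ m ih => rw [pow_succ, pow_succ, mul_coeff_zero, ih]

/-! ### The curvature polynomial `F(t) = h + t·dα + t²·α²` -/

variable (d : B →ₗ[k] B) (h0 α : B)

/-- The one-parameter family of curvatures, as a polynomial in `t`. -/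
noncomputable def Fc : B[X] := C h0 + C (d α) * X + C (α ^ 2) * X ^ 2

lemma Fc_coeff (j : ℕ) : (Fc d h0 α).coeff j =
    if j = 0 then h0 else if j = 1 then d α else if j = 2 then α ^ 2 else 0 := by
  rcases j with _ | _ | _ | j <;>
    simp only [Fc, coeff_add, coeff_C_mul, coeff_C, coeff_X, coeff_X_pow] <;>
    norm_num

lemma Fc_eval_one : (Fc d h0 α).eval 1 = h0 + d α + α ^ 2 := by
  rw [Fc, C_mul_X_eq_monomial, C_mul_X_pow_eq_monomial, eval_add, eval_add, eval_C,
    eval_monomial, eval_monomial, one_pow, mul_one, one_pow, mul_one]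

variable {d h0 α}
variable (hleib : ∀ (p : ℤ), ∀ x ∈ 𝒜 p, ∀ y : B,
    d (x * y) = d x * y + ((-1 : k) ^ p) • (x * d y))

include hleib in
/-- Leibniz rule for `Dfun`, left factor homogeneous of even sign. -/
lemma Dfun_mul_even {a : ℤ} (ha : ((-1 : k) ^ a) = 1)
    {P : B[X]} (hP : HC 𝒜 a P) (Q : B[X]) :
    Dfun d (P * Q) = Dfun d P * Q + P * Dfun d Q := by
  ext i
  rw [coeff_add, coeff_Dfun, coeff_mul, coeff_mul, coeff_mul, map_sum,
    ← Finset.sum_add_distrib]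
  refine Finset.sum_congr rfl fun x _ => ?_
  rw [hleib a _ (hP x.1), ha, one_smul, coeff_Dfun, coeff_Dfun]

include hleib in
/-- Leibniz rule for `Dfun`, left factor `C α` with `α` of degree 1. -/
lemma Dfun_mul_alpha (hα : α ∈ 𝒜 1) (Q : B[X]) :
    Dfun d (C α * Q) = C (d α) * Q - C α * Dfun d Q := by
  ext i
  rw [coeff_sub, coeff_Dfun, coeff_C_mul, coeff_C_mul, coeff_C_mul, coeff_Dfun,
    hleib 1 α hα, zpow_one, neg_smul, one_smul]
  rw [sub_eq_add_neg]

include hleib in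
lemma d_sq_alpha (hα : α ∈ 𝒜 1) : d (α ^ 2) = d α * α - α * d α := by
  rw [sq, hleib 1 α hα α, zpow_one, neg_smul, one_smul, sub_eq_add_neg]

include hleib in
/-- Bianchi identity for `F` itself. -/
lemma bianchi0 (hα : α ∈ 𝒜 1) (hdh : d h0 = 0)
    (hds : ∀ x, d (d x) = h0 * x - x * h0) :
    Dfun d (Fc d h0 α) = X * (Fc d h0 α * C α - C α * Fc d h0 α) := by
  ext j
  rcases j with _ | j
  · rw [coeff_Dfun, Fc_coeff, coeff_X_mul_zero']
    simpa using hdh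
  · rw [coeff_Dfun, Fc_coeff, coeff_X_mul, coeff_sub, coeff_mul_C, coeff_C_mul,
      Fc_coeff]
    rcases j with _ | _ | _ | j <;> norm_num
    · exact hds α
    · exact d_sq_alpha hleib hα
    · simp [pow_succ, pow_one, mul_assoc]
    · rw [if_neg (by omega), if_neg (by omega), if_neg (by omega), map_zero, sub_zero]

variable [GradedAlgebra 𝒜]

lemma Fc_HC (hh0 : h0 ∈ 𝒜 2) (hdα : d α ∈ 𝒜 2) (hα2 : α ^ 2 ∈ 𝒜 2) :
    HC 𝒜 2 (Fc d h0 α) := by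
  intro j
  rw [Fc_coeff]
  split
  · exact hh0
  split
  · exact hdα
  split
  · exact hα2
  · exact Submodule.zero_mem _

lemma Fc_pow_HC (hF : HC 𝒜 2 (Fc d h0 α)) (m : ℕ) :
    HC 𝒜 (2 * (m : ℤ)) ((Fc d h0 α) ^ m) := by
  induction m with
  | zero => simpa using HC.one
  | succ m ih =>
      have h2 : (2 * ((m + 1 : ℕ) : ℤ)) = 2 * (m : ℤ) + 2 := by push_cast; ring
      rw [pow_succ, h2]
      exact ih.mul hF

include hleib in
/-- Bianchi identity for powers of `F`. -/
lemma bianchi_pow (hα : α ∈ 𝒜 1) (hdh : d h0 = 0)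
    (hds : ∀ x, d (d x) = h0 * x - x * h0) (hd1 : d 1 = 0)
    (hF : HC 𝒜 2 (Fc d h0 α)) (m : ℕ) :
    Dfun d ((Fc d h0 α) ^ m) =
      X * ((Fc d h0 α) ^ m * C α - C α * (Fc d h0 α) ^ m) := by
  induction m with
  | zero =>
      rw [pow_zero]
      rw [show (1 : B[X]) = monomial 0 (1 : B) from (monomial_zero_one).symm,
        Dfun_monomial, hd1]
      simp
  | succ m ih =>
      rw [pow_succ,
        Dfun_mul_even hleib (Even.neg_one_zpow ⟨m, by ring⟩) (Fc_pow_HC hF m) _,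
        ih, bianchi0 hleib hα hdh hds]
      have hXP : ∀ W : B[X], (Fc d h0 α) ^ m * (X * W) = X * ((Fc d h0 α) ^ m * W) := by
        intro W
        rw [← mul_assoc, ← X_mul, mul_assoc]
      rw [hXP]
      noncomm_ring

include hleib in
/-- The key transgression identity:
`F' · F^m = D(α · F^m) + t·(α(αF^m) + (αF^m)α)`. -/
lemma transgression (hα : α ∈ 𝒜 1) (hdh : d h0 = 0)
    (hds : ∀ x, d (d x) = h0 * x - x * h0) (hd1 : d 1 = 0)
    (hF : HC 𝒜 2 (Fc d h0 α)) (m : ℕ) :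
    Polynomial.derivative (Fc d h0 α) * (Fc d h0 α) ^ m =
      Dfun d (C α * (Fc d h0 α) ^ m) +
        X * (C α * (C α * (Fc d h0 α) ^ m) + (C α * (Fc d h0 α) ^ m) * C α) := by
  have hDQ := bianchi_pow hleib hα hdh hds hd1 hF m
  have hDαQ := Dfun_mul_alpha hleib hα ((Fc d h0 α) ^ m)
  have hF' : Polynomial.derivative (Fc d h0 α) = C (d α) + X * (C (α ^ 2) + C (α ^ 2)) := by
    ext j
    rcases j with _ | _ | j
    · rw [coeff_derivative, Fc_coeff, coeff_add, coeff_C, coeff_X_mul_zero']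
      norm_num
    · rw [coeff_derivative, Fc_coeff, coeff_add, coeff_C, coeff_X_mul, coeff_add,
        coeff_C]
      norm_num [mul_two]
    · rw [coeff_derivative, Fc_coeff, coeff_add, coeff_C, coeff_X_mul, coeff_add,
        coeff_C]
      norm_num
      omega
  have hAA : (C α : B[X]) * C α = C (α ^ 2) := by rw [← C_mul, sq]
  rw [hF', hDαQ, hDQ, ← hAA]
  have hXP : ∀ W : B[X], C α * (X * W) = X * (C α * W) := by
    intro W
    rw [← mul_assoc, ← X_mul, mul_assoc]
  rw [hXP]
  noncomm_ring

/-- Expansion of the derivative of a power. -/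
lemma derivative_pow_expand (P : B[X]) (n : ℕ) :
    Polynomial.derivative (P ^ n) =
      ∑ i ∈ Finset.range n, P ^ i * Polynomial.derivative P * P ^ (n - 1 - i) := by
  induction n with
  | zero => simp
  | succ n ih =>
      rw [pow_succ, derivative_mul, ih, Finset.sum_mul, Finset.sum_range_succ]
      have h1 : ∀ i ∈ Finset.range n,
          P ^ i * Polynomial.derivative P * P ^ (n - 1 - i) * P =
            P ^ i * Polynomial.derivative P * P ^ (n + 1 - 1 - i) := by
        intro i hi
        rw [Finset.mem_range] at hi
        rw [mul_assoc, mul_assoc, ← pow_succ,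
          show n - 1 - i + 1 = n + 1 - 1 - i by omega, ← mul_assoc]
      rw [Finset.sum_congr rfl h1,
        show n + 1 - 1 - n = 0 by omega, pow_zero, mul_one]

end ChernInvAux

/-- In a CDG-algebra over a field of characteristic `0`, the Chern
class is invariant under equivalence: if `h' = h + d(α) + α²` (and
`d' = d + [α, ·]`) for some `α ∈ B¹`, then `T(h'^n) - T(h^n)` lies in the image of
the induced differential `δ_C` on `C = B/[B,B]`; hence the cohomology class of
`c_n = T(h^n)` is unchanged. -/
theorem chern_class_invariant (k B : Type) [Field k] [CharZero k]
    [Ring B] [Algebra k B]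
    (𝒜 : ℤ → Submodule k B) [GradedAlgebra 𝒜] (Ψ Ψ' : CDG k B 𝒜)
    (α : B) (hα : α ∈ 𝒜 1)
    (hd' : ∀ (p : ℤ), ∀ x ∈ 𝒜 p,
      Ψ'.d x = Ψ.d x + (α * x - ((-1 : k) ^ p) • (x * α)))
    (hh' : Ψ'.h = Ψ.h + Ψ.d α + α ^ 2)
    (N : Submodule k B) (hN : N = Submodule.span k (superCommSet 𝒜))
    (δC : (B ⧸ N) →ₗ[k] (B ⧸ N))
    (hδC : ∀ x : B, δC (N.mkQ x) = N.mkQ (Ψ.d x))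
    (n : ℕ) :
    N.mkQ (Ψ'.h ^ n) - N.mkQ (Ψ.h ^ n) ∈ LinearMap.range δC := by
  classical
  open Polynomial ChernInvAux in
  have hd1 : Ψ.d 1 = 0 := by
    have h1 := Ψ.leibniz 0 1 (SetLike.one_mem_graded 𝒜) 1
    simp only [one_mul, mul_one, zpow_zero, one_smul] at h1
    have h2 : Ψ.d 1 + Ψ.d 1 = Ψ.d 1 + 0 := by rw [← h1, add_zero]
    exact add_left_cancel h2
  have hα2 : α ^ 2 ∈ 𝒜 2 := by
    have h2 := SetLike.mul_mem_graded hα hα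
    rw [sq]
    rwa [show (1 + 1 : ℤ) = 2 by norm_num] at h2
  have hdα : Ψ.d α ∈ 𝒜 2 := by
    have h2 := Ψ.d_mem 1 α hα
    rwa [show (1 + 1 : ℤ) = 2 by norm_num] at h2
  have hFHC : HC 𝒜 2 (Fc Ψ.d Ψ.h α) := Fc_HC Ψ.h_mem hdα hα2
  have hFpowHC : ∀ m : ℕ, HC 𝒜 (2 * (m : ℤ)) ((Fc Ψ.d Ψ.h α) ^ m) := Fc_pow_HC hFHC
  have hCα : HC 𝒜 1 (C α : B[X]) := HC.C_mem hα
  have hCαQ : HC 𝒜 (1 + 2 * ((n - 1 : ℕ) : ℤ)) (C α * (Fc Ψ.d Ψ.h α) ^ (n - 1)) :=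
    hCα.mul (hFpowHC (n - 1))
  have hterm : ∀ i ∈ Finset.range n,
      integ N ((Fc Ψ.d Ψ.h α) ^ i * Polynomial.derivative (Fc Ψ.d Ψ.h α) *
          (Fc Ψ.d Ψ.h α) ^ (n - 1 - i)) =
        δC (integ N (C α * (Fc Ψ.d Ψ.h α) ^ (n - 1))) := by
    intro i hi
    rw [Finset.mem_range] at hi
    have hQ' : HC 𝒜 (2 + 2 * ((n - 1 - i : ℕ) : ℤ))
        (Polynomial.derivative (Fc Ψ.d Ψ.h α) * (Fc Ψ.d Ψ.h α) ^ (n - 1 - i)) :=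
      (hFHC.derivative).mul (hFpowHC (n - 1 - i))
    have hcn : CN N ((Fc Ψ.d Ψ.h α) ^ i *
        (Polynomial.derivative (Fc Ψ.d Ψ.h α) * (Fc Ψ.d Ψ.h α) ^ (n - 1 - i)) -
        (Polynomial.derivative (Fc Ψ.d Ψ.h α) * (Fc Ψ.d Ψ.h α) ^ (n - 1 - i)) *
          (Fc Ψ.d Ψ.h α) ^ i) :=
      CN_commutator hN (hFpowHC i) hQ' (Even.mul_right ⟨(i : ℤ), by ring⟩ _)
    have e2 : integ N ((Fc Ψ.d Ψ.h α) ^ i *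
        (Polynomial.derivative (Fc Ψ.d Ψ.h α) * (Fc Ψ.d Ψ.h α) ^ (n - 1 - i)))
        = integ N ((Polynomial.derivative (Fc Ψ.d Ψ.h α) * (Fc Ψ.d Ψ.h α) ^ (n - 1 - i)) *
            (Fc Ψ.d Ψ.h α) ^ i) := by
      have h0' := integ_of_CN hcn
      rw [map_sub] at h0'
      exact sub_eq_zero.mp h0'
    have e3 : (Polynomial.derivative (Fc Ψ.d Ψ.h α) * (Fc Ψ.d Ψ.h α) ^ (n - 1 - i)) *
        (Fc Ψ.d Ψ.h α) ^ i
        = Polynomial.derivative (Fc Ψ.d Ψ.h α) * (Fc Ψ.d Ψ.h α) ^ (n - 1) := by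
      rw [mul_assoc, ← pow_add, show (n - 1 - i) + i = n - 1 by omega]
    have e4 := transgression (𝒜 := 𝒜) Ψ.leibniz hα Ψ.d_h Ψ.d_sq hd1 hFHC (n - 1)
    have hcn2 : CN N (X * (C α * (C α * (Fc Ψ.d Ψ.h α) ^ (n - 1)) +
        (C α * (Fc Ψ.d Ψ.h α) ^ (n - 1)) * C α)) := by
      intro j
      rcases j with _ | j
      · rw [coeff_X_mul_zero']; exact N.zero_mem
      · rw [coeff_X_mul]
        exact CN_anticommutator hN hCα hCαQ
          ⟨((n - 1 : ℕ) : ℤ), by push_cast; ring⟩ j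
    rw [mul_assoc, e2, e3, e4, map_add, integ_of_CN hcn2, add_zero,
      integ_Dfun Ψ.d δC hδC]
  have hkey : integ N (Polynomial.derivative ((Fc Ψ.d Ψ.h α) ^ n)) =
      δC (n • integ N (C α * (Fc Ψ.d Ψ.h α) ^ (n - 1))) := by
    rw [derivative_pow_expand, map_sum, Finset.sum_congr rfl hterm, Finset.sum_const,
      Finset.card_range, map_nsmul]
  have hleft : integ N (Polynomial.derivative ((Fc Ψ.d Ψ.h α) ^ n))
      = N.mkQ (Ψ'.h ^ n) - N.mkQ (Ψ.h ^ n) := by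
    rw [integ_derivative, eval_one_pow', coeff_zero_pow', Fc_eval_one, Fc_coeff,
      if_pos rfl, hh']
  exact ⟨n • integ N (C α * (Fc Ψ.d Ψ.h α) ^ (n - 1)), by rw [← hkey, hleft]⟩
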